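/- arXiv:2506.20336 — 2 statements merged into one kernel-verified Lean document; each statement's English description precedes it below -/
import Mathlib

section
/- The Gamma-Gamma density f(η) = (2(αβ)^{(α+β)/2} / (Γ(α)Γ(β))) · η^{(α+β)/2 - 1} · K_{α-β}(2√(αβη)) integrates to 1 over (0, ∞), for α, β > 0. -/
open MeasureTheory

/-- Modified Bessel function of the second kind (integral representation). -/
noncomputable def besselK (ν x : ℝ) : ℝ :=
  ∫ t in Set.Ioi (0:ℝ), Real.exp (-x * Real.cosh t) * Real.cosh (ν * t)

/-!
Substituting `x = √z · eᵗ` in the cosh representation gives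
`K_ν(2√z) = ½ z^(-ν/2) ∫₀^∞ x^(ν-1) e^(-x - z/x) dx`, which turns the Gamma-Gamma density at `η`
into `(αβ)^β / (Γ(α)Γ(β))` times `∫₀^∞ η^(β-1) x^(α-β-1) e^(-x - αβη/x) dx`. After Fubini, the
`η`-integral is a Gamma integral equal to `Γ(β) (x/αβ)^β`, and what remains is `Γ(α) Γ(β) / (αβ)^β`.
-/

open Real Set Filter Asymptotics

theorem isBigO_exp_mul_sub_mul_cosh_atTop (a : ℝ) {w : ℝ} (hw : 0 < w) :
    (fun t => exp (a * t - w * cosh t)) =O[atTop] fun t => exp (-t) := by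
  refine IsBigO.of_bound 1 ?_
  filter_upwards [eventually_ge_atTop (max 0 (4 * (a + 1) / w))] with t ht
  have ht0 : 0 ≤ t := le_of_max_le_left ht
  have hta : 4 * (a + 1) ≤ t * w := (div_le_iff₀ hw).mp (le_of_max_le_right ht)
  have hcosh : t ^ 2 / 4 ≤ cosh t := by
    rw [cosh_eq]; nlinarith [quadratic_le_exp_of_nonneg ht0, exp_pos (-t)]
  rw [norm_of_nonneg (exp_pos _).le, norm_of_nonneg (exp_pos _).le, one_mul, exp_le_exp]
  nlinarith [mul_le_mul_of_nonneg_left hcosh hw.le, mul_le_mul_of_nonneg_right hta ht0]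

theorem integrable_exp_mul_sub_mul_cosh (a : ℝ) {w : ℝ} (hw : 0 < w) :
    Integrable fun t => exp (a * t - w * cosh t) := by
  have hbot : (fun t => exp (a * t - w * cosh t)) =O[atBot] exp := by
    simpa [Function.comp_def, cosh_neg] using
      (isBigO_exp_mul_sub_mul_cosh_atTop (-a) hw).comp_tendsto tendsto_neg_atBot_atTop
  exact (Continuous.locallyIntegrable (by fun_prop)).integrable_of_isBigO_atBot_atTop hbot
    ⟨Iic 0, Iic_mem_atBot 0, integrableOn_exp_Iic 0⟩ (isBigO_exp_mul_sub_mul_cosh_atTop a hw)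
    ⟨Ioi 0, Ioi_mem_atTop 0, integrableOn_exp_neg_Ioi 0⟩

theorem two_mul_besselK (ν : ℝ) {x : ℝ} (hx : 0 < x) :
    2 * besselK ν x = ∫ t, exp (ν * t - x * cosh t) := by
  set g : ℝ → ℝ := fun t => exp (ν * t - x * cosh t)
  have hg : Integrable g := integrable_exp_mul_sub_mul_cosh ν hx
  have heven : ∀ t, exp (-x * cosh |t|) * cosh (ν * |t|) = (g t + g (-t)) / 2 := by
    intro t
    rw [cosh_abs, show cosh (ν * |t|) = cosh (ν * t) by
      rcases abs_choice t with h | h <;> simp [h, cosh_neg]]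
    simp only [g, cosh_eq (ν * t), cosh_neg, mul_neg, sub_eq_add_neg, exp_add, neg_mul]
    ring
  calc 2 * besselK ν x = ∫ t, (g t + g (-t)) / 2 := by
        rw [besselK, ← integral_comp_abs (f := fun t => exp (-x * cosh t) * cosh (ν * t))]
        simp only [heven]
    _ = ((∫ t, g t) + ∫ t, g (-t)) / 2 := by
        rw [integral_div, integral_add hg hg.comp_neg]
    _ = ∫ t, g t := by rw [integral_neg_eq_self]; ring

theorem integral_Ioi_eq_integral_mul_exp (f : ℝ → ℝ) {r : ℝ} (hr : 0 < r) :
    ∫ x in Ioi 0, f x = ∫ t, r * exp t * f (r * exp t) := by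
  have himage : (fun t => r * exp t) '' univ = Ioi 0 := by
    rw [image_univ, show range (fun t => r * exp t) = range ((r * ·) ∘ exp) from rfl,
      range_comp, range_exp, image_mul_left_Ioi hr, mul_zero]
  have hinj : InjOn (fun t => r * exp t) univ := fun s _ t _ h =>
    exp_injective (mul_left_cancel₀ hr.ne' h)
  rw [← himage, integral_image_eq_integral_abs_deriv_smul MeasurableSet.univ
    (fun t _ => ((hasDerivAt_exp t).const_mul r).hasDerivWithinAt) hinj, Measure.restrict_univ]
  simp only [smul_eq_mul, abs_of_pos (mul_pos hr (exp_pos _))]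

theorem integral_rpow_mul_exp_neg_sub_div (ν : ℝ) {z : ℝ} (hz : 0 < z) :
    ∫ x in Ioi 0, x ^ (ν - 1) * exp (-x - z / x) =
      √z ^ ν * ∫ t, exp (ν * t - 2 * √z * cosh t) := by
  have hr : 0 < √z := sqrt_pos.mpr hz
  rw [integral_Ioi_eq_integral_mul_exp _ hr, ← integral_const_mul]
  congr 1 with t
  have hz' : z / (√z * exp t) = √z * exp (-t) := by
    rw [exp_neg]; field_simp; exact (sq_sqrt hz.le).symm
  rw [hz', mul_rpow hr.le (exp_pos t).le, ← exp_mul, cosh_eq,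
    show √z ^ ν = √z ^ (ν - 1) * √z by rw [← rpow_add_one hr.ne']; ring_nf]
  rw [show ν * t - 2 * √z * ((exp t + exp (-t)) / 2)
      = t + t * (ν - 1) + (-(√z * exp t) - √z * exp (-t)) by ring, exp_add, exp_add]
  ring

theorem besselK_two_mul_sqrt (ν : ℝ) {z : ℝ} (hz : 0 < z) :
    besselK ν (2 * √z) = z ^ (-ν / 2) / 2 * ∫ x in Ioi 0, x ^ (ν - 1) * exp (-x - z / x) := by
  have hpow : z ^ (-ν / 2) * √z ^ ν = 1 := by
    rw [sqrt_eq_rpow, ← rpow_mul hz.le, ← rpow_add hz]; ring_nf; exact rpow_zero z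
  rw [integral_rpow_mul_exp_neg_sub_div ν hz, ← two_mul_besselK ν (by positivity)]
  linear_combination (-besselK ν (2 * √z)) * hpow

theorem integrableOn_rpow_mul_exp_neg_mul {a r : ℝ} (ha : 0 < a) (hr : 0 < r) :
    IntegrableOn (fun t => t ^ (a - 1) * exp (-(r * t))) (Ioi 0) :=
  Integrable.of_integral_ne_zero (by rw [integral_rpow_mul_exp_neg_mul_Ioi ha hr]; positivity)

theorem integral_rpow_mul_integral_rpow_mul_exp_neg_sub_mul_div {a b c : ℝ}
    (ha : 0 < a) (hb : 0 < b) (hc : 0 < c) :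
    ∫ η in Ioi 0, η ^ (b - 1) * ∫ x in Ioi 0, x ^ (a - b - 1) * exp (-x - c * η / x) =
      Gamma a * Gamma b / c ^ b := by
  set u : ℝ → ℝ → ℝ := fun x η =>
    x ^ (a - b - 1) * exp (-x) * (η ^ (b - 1) * exp (-(c / x * η)))
  have hinner : ∀ x ∈ Ioi (0 : ℝ),
      ∫ η in Ioi 0, u x η = Gamma b / c ^ b * (exp (-x) * x ^ (a - 1)) := by
    intro x hx
    have hpow : x ^ (a - b - 1) * x ^ b = x ^ (a - 1) := by
      rw [← rpow_add hx]; ring_nf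
    rw [integral_const_mul, integral_rpow_mul_exp_neg_mul_Ioi hb (div_pos hc hx), one_div_div,
      div_rpow hx.le hc.le, ← hpow]
    field_simp
  have hu : Integrable (Function.uncurry u)
      ((volume.restrict (Ioi 0)).prod (volume.restrict (Ioi 0))) := by
    refine (integrable_prod_iff (Measurable.aestronglyMeasurable (by fun_prop))).mpr ⟨?_, ?_⟩
    · filter_upwards [ae_restrict_mem measurableSet_Ioi] with x hx
      exact (integrableOn_rpow_mul_exp_neg_mul hb (div_pos hc hx)).const_mul
        (x ^ (a - b - 1) * exp (-x))
    · refine IntegrableOn.congr_fun ((GammaIntegral_convergent ha).const_mul (Gamma b / c ^ b))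
        (fun x hx => ?_) measurableSet_Ioi
      rw [← hinner x hx]
      refine setIntegral_congr_fun measurableSet_Ioi fun η hη => (norm_of_nonneg ?_).symm
      have : 0 < x := hx
      have : 0 < η := hη
      positivity
  calc ∫ η in Ioi 0, η ^ (b - 1) * ∫ x in Ioi 0, x ^ (a - b - 1) * exp (-x - c * η / x)
        = ∫ η in Ioi 0, ∫ x in Ioi 0, u x η := by
        refine setIntegral_congr_fun measurableSet_Ioi fun η _ => ?_
        rw [← integral_const_mul]
        congr 1 with x
        rw [show -x - c * η / x = -x + -(c / x * η) by ring, exp_add]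
        ring
    _ = ∫ x in Ioi 0, ∫ η in Ioi 0, u x η := (integral_integral_swap hu).symm
    _ = ∫ x in Ioi 0, Gamma b / c ^ b * (exp (-x) * x ^ (a - 1)) :=
        setIntegral_congr_fun measurableSet_Ioi hinner
    _ = Gamma a * Gamma b / c ^ b := by
        rw [integral_const_mul, ← Gamma_eq_integral ha]; ring

theorem gammaGamma_integrates_to_one (α β : ℝ) (hα : 0 < α) (hβ : 0 < β) :
    ∫ η in Set.Ioi (0:ℝ),
      (2 * (α * β) ^ ((α + β) / 2) / (Real.Gamma α * Real.Gamma β)) *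
        η ^ ((α + β) / 2 - 1) * besselK (α - β) (2 * Real.sqrt (α * β * η)) = 1 := by
  have hc : 0 < α * β := mul_pos hα hβ
  have hdensity : ∀ η ∈ Ioi (0 : ℝ),
      2 * (α * β) ^ ((α + β) / 2) / (Gamma α * Gamma β) * η ^ ((α + β) / 2 - 1) *
          besselK (α - β) (2 * √(α * β * η)) =
        (α * β) ^ β / (Gamma α * Gamma β) *
          (η ^ (β - 1) * ∫ x in Ioi 0, x ^ (α - β - 1) * exp (-x - α * β * η / x)) := by
    intro η hη
    have hcpow : (α * β) ^ ((α + β) / 2) * (α * β) ^ (-(α - β) / 2) = (α * β) ^ β := by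
      rw [← rpow_add hc]; ring_nf
    have hηpow : η ^ ((α + β) / 2 - 1) * η ^ (-(α - β) / 2) = η ^ (β - 1) := by
      rw [← rpow_add hη]; ring_nf
    rw [besselK_two_mul_sqrt _ (mul_pos hc hη), mul_rpow hc.le hη.le, ← hcpow, ← hηpow]
    ring
  rw [setIntegral_congr_fun measurableSet_Ioi hdensity, integral_const_mul,
    integral_rpow_mul_integral_rpow_mul_exp_neg_sub_mul_div hα hβ hc]
  field_simp
end

section
/- The function r ↦ μ_p(r) = (2/(π w²)) ∬_{x²+y² ≤ r_a²} exp(-2((x-r)²+y²)/w²) dx dy is monotonically nonincreasing in r on [0, ∞). -/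
/-!
By Fubini, integrate first along the direction of the displacement. For fixed `y` the chord of the
disk is a symmetric interval `[-a, a]`, and the Gaussian mass of `[-a, a]` shifted by `r` has
derivative `f (a + r) - f (a - r) ≤ 0` in `r ≥ 0`, because a centred Gaussian `f` is even and
decreasing in `|x|`, and `|a - r| ≤ a + r`.
-/

open MeasureTheory Set

section SymmetricDecreasing

variable {f : ℝ → ℝ}

theorem antitoneOn_intervalIntegral_comp_sub (hf : Continuous f) (heven : ∀ x, f (-x) = f x)
    (hanti : AntitoneOn f (Ici 0)) {a : ℝ} (ha : 0 ≤ a) :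
    AntitoneOn (fun r => ∫ x in -a..a, f (x - r)) (Ici 0) := by
  set Φ : ℝ → ℝ := fun t => ∫ x in (0 : ℝ)..t, f x
  have hΦ : ∀ t, HasDerivAt Φ (f t) t := fun t => (hf.integral_hasStrictDerivAt 0 t).hasDerivAt
  have hrepr : (fun r => ∫ x in -a..a, f (x - r)) = fun r => Φ (a - r) - Φ (-a - r) := by
    funext r
    rw [intervalIntegral.integral_comp_sub_right,
      intervalIntegral.integral_interval_sub_left (hf.intervalIntegrable _ _)
        (hf.intervalIntegrable _ _)]
  have hderiv : ∀ r, HasDerivAt (fun r => Φ (a - r) - Φ (-a - r)) (f (a + r) - f (a - r)) r := by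
    intro r
    have h₁ := (hΦ (a - r)).comp r ((hasDerivAt_id r).const_sub a)
    have h₂ := (hΦ (-a - r)).comp r ((hasDerivAt_id r).const_sub (-a))
    have hreflect : f (-a - r) = f (a + r) := by rw [← heven (a + r), neg_add']
    exact (h₁.sub h₂).congr_deriv (by rw [hreflect]; ring)
  have habs : ∀ x, f |x| = f x := fun x => by
    rcases abs_choice x with h | h <;> simp [h, heven]
  rw [hrepr]
  refine antitoneOn_of_hasDerivWithinAt_nonpos (convex_Ici 0)
    (fun r _ => (hderiv r).continuousAt.continuousWithinAt)
    (fun r _ => (hderiv r).hasDerivWithinAt) fun r hr => ?_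
  rw [interior_Ici, mem_Ioi] at hr
  rw [sub_nonpos, ← habs (a - r)]
  exact hanti (mem_Ici.2 (abs_nonneg _)) (mem_Ici.2 (by linarith))
    (abs_sub_le_iff.2 ⟨by linarith, by linarith⟩)

theorem antitoneOn_setIntegral_sq_le_comp_sub (hf : Continuous f) (heven : ∀ x, f (-x) = f x)
    (hanti : AntitoneOn f (Ici 0)) (b : ℝ) :
    AntitoneOn (fun r => ∫ x in {x : ℝ | x ^ 2 ≤ b}, f (x - r)) (Ici 0) := by
  by_cases hb : 0 ≤ b
  · have hset : {x : ℝ | x ^ 2 ≤ b} = Icc (-√b) √b := by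
      ext x
      exact Real.sq_le hb
    simp_rw [hset, integral_Icc_eq_integral_Ioc,
      ← intervalIntegral.integral_of_le (neg_le_self (Real.sqrt_nonneg b))]
    exact antitoneOn_intervalIntegral_comp_sub hf heven hanti (Real.sqrt_nonneg b)
  · have hset : {x : ℝ | x ^ 2 ≤ b} = ∅ :=
      eq_empty_of_forall_notMem fun x hx => hb ((sq_nonneg x).trans hx)
    simp_rw [hset, Measure.restrict_empty, integral_zero_measure]
    exact antitoneOn_const

end SymmetricDecreasing

theorem antitoneOn_exp_neg_mul_sq {c : ℝ} (hc : 0 ≤ c) :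
    AntitoneOn (fun x => Real.exp (-c * x ^ 2)) (Ici 0) := fun x hx y _ hxy =>
  Real.exp_le_exp.2 <| by nlinarith [mul_le_mul_of_nonneg_left (pow_le_pow_left₀ hx hxy 2) hc]

section Disk

variable {F : ℝ × ℝ → ℝ}

theorem integrableOn_disk (hF : Continuous F) (ρ : ℝ) :
    IntegrableOn F {p : ℝ × ℝ | p.1 ^ 2 + p.2 ^ 2 ≤ ρ ^ 2} := by
  refine IntegrableOn.mono_set (t := Icc (-|ρ|, -|ρ|) (|ρ|, |ρ|)) hF.integrableOn_Icc
    fun p hp => ?_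
  have h₁ : |p.1| ≤ |ρ| := sq_le_sq.1 (by nlinarith [sq_nonneg p.2, hp.out])
  have h₂ : |p.2| ≤ |ρ| := sq_le_sq.1 (by nlinarith [sq_nonneg p.1, hp.out])
  exact ⟨⟨(abs_le.1 h₁).1, (abs_le.1 h₂).1⟩, ⟨(abs_le.1 h₁).2, (abs_le.1 h₂).2⟩⟩

theorem integral_indicator_disk_apply (ρ y : ℝ) :
    ∫ x, {p : ℝ × ℝ | p.1 ^ 2 + p.2 ^ 2 ≤ ρ ^ 2}.indicator F (x, y) =
      ∫ x in {x : ℝ | x ^ 2 + y ^ 2 ≤ ρ ^ 2}, F (x, y) := by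
  rw [← integral_indicator (measurableSet_le (by fun_prop) measurable_const)]
  rfl

theorem integrable_indicator_disk (hF : Continuous F) (ρ : ℝ) :
    Integrable ({p : ℝ × ℝ | p.1 ^ 2 + p.2 ^ 2 ≤ ρ ^ 2}.indicator F)
      ((volume : Measure ℝ).prod volume) := by
  rw [← Measure.volume_eq_prod]
  exact (integrableOn_disk hF ρ).integrable_indicator
    (measurableSet_le (by fun_prop) measurable_const)

theorem setIntegral_disk_eq_integral_setIntegral (hF : Continuous F) (ρ : ℝ) :
    ∫ p in {p : ℝ × ℝ | p.1 ^ 2 + p.2 ^ 2 ≤ ρ ^ 2}, F p =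
      ∫ y, ∫ x in {x : ℝ | x ^ 2 + y ^ 2 ≤ ρ ^ 2}, F (x, y) := by
  rw [← integral_indicator (measurableSet_le (by fun_prop) measurable_const),
    Measure.volume_eq_prod, integral_prod_symm _ (integrable_indicator_disk hF ρ)]
  simp only [integral_indicator_disk_apply]

theorem integrable_setIntegral_disk_section (hF : Continuous F) (ρ : ℝ) :
    Integrable fun y => ∫ x in {x : ℝ | x ^ 2 + y ^ 2 ≤ ρ ^ 2}, F (x, y) := by
  simpa only [integral_indicator_disk_apply] using
    (integrable_indicator_disk hF ρ).integral_prod_right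

theorem antitoneOn_setIntegral_disk_comp_sub_mul {f g : ℝ → ℝ} (hf : Continuous f)
    (heven : ∀ x, f (-x) = f x) (hanti : AntitoneOn f (Ici 0)) (hg : Continuous g)
    (hg₀ : ∀ y, 0 ≤ g y) (ρ : ℝ) :
    AntitoneOn (fun r => ∫ p in {p : ℝ × ℝ | p.1 ^ 2 + p.2 ^ 2 ≤ ρ ^ 2}, f (p.1 - r) * g p.2)
      (Ici 0) := by
  have hF : ∀ r, Continuous fun p : ℝ × ℝ => f (p.1 - r) * g p.2 := fun r => by fun_prop
  intro r₁ h₁ r₂ h₂ h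
  dsimp only
  rw [setIntegral_disk_eq_integral_setIntegral (hF r₁),
    setIntegral_disk_eq_integral_setIntegral (hF r₂)]
  refine integral_mono (integrable_setIntegral_disk_section (hF r₂) ρ)
    (integrable_setIntegral_disk_section (hF r₁) ρ) fun y => ?_
  have hchord : {x : ℝ | x ^ 2 + y ^ 2 ≤ ρ ^ 2} = {x | x ^ 2 ≤ ρ ^ 2 - y ^ 2} := by
    simp_rw [le_sub_iff_add_le]
  simp_rw [hchord, integral_mul_const]
  exact mul_le_mul_of_nonneg_right
    (antitoneOn_setIntegral_sq_le_comp_sub hf heven hanti _ h₁ h₂ h) (hg₀ y)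

end Disk

theorem capture_prob_antitone_general (w ra : ℝ) :
    AntitoneOn (fun r : ℝ =>
      (2 / (Real.pi * w ^ 2)) *
        ∫ p in {p : ℝ × ℝ | p.1 ^ 2 + p.2 ^ 2 ≤ ra ^ 2},
          Real.exp (-2 * ((p.1 - r) ^ 2 + p.2 ^ 2) / w ^ 2))
      (Set.Ici 0) := by
  have hsplit : ∀ r (p : ℝ × ℝ), Real.exp (-2 * ((p.1 - r) ^ 2 + p.2 ^ 2) / w ^ 2) =
      Real.exp (-(2 / w ^ 2) * (p.1 - r) ^ 2) * Real.exp (-(2 / w ^ 2) * p.2 ^ 2) := by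
    intro r p
    rw [← Real.exp_add]
    ring_nf
  have hmass := antitoneOn_setIntegral_disk_comp_sub_mul
    (f := fun x => Real.exp (-(2 / w ^ 2) * x ^ 2))
    (g := fun y => Real.exp (-(2 / w ^ 2) * y ^ 2))
    (by fun_prop) (fun x => by simp only [neg_sq]) (antitoneOn_exp_neg_mul_sq (by positivity))
    (by fun_prop) (fun y => (Real.exp_pos _).le) ra
  intro r₁ h₁ r₂ h₂ h
  simp_rw [hsplit]
  exact mul_le_mul_of_nonneg_left (hmass h₁ h₂ h) (by positivity)

theorem capture_prob_antitone (w ra : ℝ) (hw : 0 < w) (hra : 0 < ra) :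
    AntitoneOn (fun r : ℝ =>
      (2 / (Real.pi * w ^ 2)) *
        ∫ p in {p : ℝ × ℝ | p.1 ^ 2 + p.2 ^ 2 ≤ ra ^ 2},
          Real.exp (-2 * ((p.1 - r) ^ 2 + p.2 ^ 2) / w ^ 2))
      (Set.Ici 0) :=
  capture_prob_antitone_general w ra
end
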